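/- Let |T⟩ := (|0⟩ + e^{iπ/4}|1⟩)/√2 ∈ ℂ². Let ρ̂ be a full-rank density matrix on ℂ^D, let F be a nonempty closed set of density matrices on ℂ^D with R_F(ρ̂) < ∞, let n, m ≥ 1, and let F_n be a closed set of density matrices on ℂ^{D^n} such that ω^{⊗n} ∈ F_n for every ω ∈ F. Let F'_m be a set of density matrices on ℂ^{2^m} ≅ (ℂ²)^{⊗m} such that sup_{ω ∈ F'_m} ⟨T^{⊗m}, ω T^{⊗m}⟩ ≤ (4 − 2√2)^{−m}. Let (L, G) be a probabilistic free protocol from (F_n, ℂ^{D^n}) to (F'_m, ℂ^{2^m}) with p := Tr(L(ρ̂^{⊗n})) > 0 and output τ := L(ρ̂^{⊗n})/p. Suppose for each i = 1, …, m, Tr(τ · (I_2^{⊗(i−1)} ⊗ |T⟩⟨T| ⊗ I_2^{⊗(m−i)})) ≥ 1 − ε. Then ε/p ≥ λ_min(ρ̂)^n · (1 − (4 − 2√2)^{−m}) / (m · (1 + R_F(ρ̂))^n); equivalently, for ε > 0, ((1 + R_F(ρ̂))/λ_min(ρ̂))^n ≥ ((4 − 2√2)^m − 1)·p / ((4 −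 2√2)^m · m · ε). (Theorem 3: lower bound on the overhead of magic state distillation.) -/

import Mathlib

open scoped Matrix ComplexOrder

noncomputable section

/-- A density matrix: a positive semidefinite complex matrix with unit trace. -/
def IsDensity {n : Type*} [Fintype n] (A : Matrix n n ℂ) : Prop :=
  A.PosSemidef ∧ A.trace = 1

/-- The smallest eigenvalue of a Hermitian matrix (`0` by convention otherwise). -/
noncomputable def minEig {n : Type*} [Fintype n] [DecidableEq n] (A : Matrix n n ℂ) : ℝ :=
  letI := Classical.propDecidable A.IsHermitian
  if h : A.IsHermitian then ⨅ i, h.eigenvalues i else 0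

/-- The overlap `⟨ψ, A ψ⟩` (as a real number). -/
noncomputable def overlap {n : Type*} [Fintype n] (A : Matrix n n ℂ) (ψ : n → ℂ) : ℝ :=
  (dotProduct (star ψ) (A.mulVec ψ)).re

/-- `f_ψ = sup_{ω ∈ F} ⟨ψ, ω ψ⟩`, with the convention `sup ∅ = 0`. -/
noncomputable def maxOverlap {n : Type*} [Fintype n] (F : Set (Matrix n n ℂ)) (ψ : n → ℂ) : ℝ :=
  sSup ((fun ω => overlap ω ψ) '' F)

/-- A positive map: it sends positive semidefinite matrices to positive semidefinite matrices. -/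
def PosMap {n m : Type*} [Fintype n] [Fintype m]
    (Φ : Matrix n n ℂ →ₗ[ℂ] Matrix m m ℂ) : Prop :=
  ∀ X, X.PosSemidef → (Φ X).PosSemidef

/-- A trace-preserving map. -/
def TracePreserving {n m : Type*} [Fintype n] [Fintype m]
    (Φ : Matrix n n ℂ →ₗ[ℂ] Matrix m m ℂ) : Prop :=
  ∀ X, (Φ X).trace = X.trace

/-- The feasible set for the generalized robustness:
`{ s ≥ 0 : ∃ density σ, (ρ + sσ)/(1+s) ∈ F }`.  Its nonemptiness encodes `R_F(ρ) < ∞`. -/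
def RobustSet {n : Type*} [Fintype n] (F : Set (Matrix n n ℂ)) (ρ : Matrix n n ℂ) : Set ℝ :=
  {s : ℝ | 0 ≤ s ∧ ∃ σ : Matrix n n ℂ, IsDensity σ ∧ (1 + s)⁻¹ • (ρ + s • σ) ∈ F}

/-- The generalized robustness `R_F(ρ)`. -/
noncomputable def Robustness {n : Type*} [Fintype n] (F : Set (Matrix n n ℂ))
    (ρ : Matrix n n ℂ) : ℝ :=
  sInf (RobustSet F ρ)

/-- The `n`-fold Kronecker power of a `d × d` matrix, realized on the index type
`Fin n → Fin d` (canonically identifying `ℂ^{d^n} ≅ (ℂ^d)^{⊗n}`). -/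
noncomputable def kronPow {d : ℕ} (A : Matrix (Fin d) (Fin d) ℂ) (n : ℕ) :
    Matrix (Fin n → Fin d) (Fin n → Fin d) ℂ :=
  Matrix.of fun x y => ∏ i, A (x i) (y i)

/-- The magic state `|T⟩ = (|0⟩ + e^{iπ/4}|1⟩)/√2`. -/
noncomputable def Tket : Fin 2 → ℂ :=
  ![(Real.sqrt 2 : ℂ)⁻¹, Complex.exp (Complex.I * (Real.pi / 4)) * (Real.sqrt 2 : ℂ)⁻¹]

/-- `|T⟩^{⊗m}` as a vector on `(ℂ²)^{⊗m}` (index type `Fin m → Fin 2`). -/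
noncomputable def TketPow (m : ℕ) : (Fin m → Fin 2) → ℂ :=
  fun x => ∏ i, Tket (x i)

/-- `I ⊗ ⋯ ⊗ |T⟩⟨T| ⊗ ⋯ ⊗ I`, with `|T⟩⟨T|` in the `i`-th slot. -/
noncomputable def margTProj (m : ℕ) (i : Fin m) :
    Matrix (Fin m → Fin 2) (Fin m → Fin 2) ℂ :=
  Matrix.of fun x y => (Tket (x i) * star (Tket (y i))) *
    ∏ j ∈ Finset.univ.erase i, (if x j = y j then (1 : ℂ) else 0)

/-!
Let `λ = λ_min(ρ̂)` and let `s` be feasible for the robustness, with free state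
`ω = (ρ̂ + sσ)/(1+s)`. Then `λ ω ≤ ρ̂ ≤ (1+s) ω` in the Loewner order, and since tensor powers
are monotone on positive matrices, `λⁿ ω^{⊗n} ≤ ρ̂^{⊗n} ≤ (1+s)ⁿ ω^{⊗n}`. The free
sub-operation maps `ω^{⊗n}` to `t ω'` with `ω' ∈ F'_m`, so positivity of `L` gives
`p ≤ (1+s)ⁿ t` and `λⁿ t Tr(ω'(1 - Π)) ≤ p Tr(τ(1 - Π))` for `Π = |T⟩⟨T|^{⊗m}`, where
`Tr(ω' Π) ≤ (4 - 2√2)^{-m}`. The marginal projections `Πᵢ` commute and multiply to `Π`, so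
`1 - Π ≤ ∑ᵢ (1 - Πᵢ)` and `Tr(τ(1 - Π)) ≤ mε`. Hence `λⁿ (1 - (4 - 2√2)^{-m}) ≤ mε (1+s)ⁿ`;
let `s` decrease to `R_F(ρ̂)` and use `p ≤ 1`.
-/

lemma IsStarProjection.one_sub_mul_le {R : Type*} [Ring R] [PartialOrder R] [StarRing R]
    [StarOrderedRing R] {p q : R} (hp : IsStarProjection p) (hq : IsStarProjection q)
    (hpq : Commute p q) : 1 - p * q ≤ (1 - p) + (1 - q) := by
  have hcomm : Commute (1 - p) (1 - q) :=
    (Commute.one_right _).sub_right ((Commute.one_left q).sub_left hpq)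
  have := (hp.one_sub.mul hq.one_sub hcomm).nonneg
  rw [← sub_nonneg]
  convert this using 1
  noncomm_ring

open scoped MatrixOrder

namespace Matrix

section LoewnerOrder

variable {n : Type*} [Fintype n]

lemma re_trace_mul_nonneg {A B : Matrix n n ℂ} (hA : 0 ≤ A) (hB : 0 ≤ B) :
    0 ≤ (A * B).trace.re := by
  classical
  obtain ⟨C, rfl⟩ := CStarAlgebra.nonneg_iff_eq_star_mul_self.mp hB
  rw [← mul_assoc, trace_mul_cycle, star_eq_conjTranspose]
  exact (Complex.nonneg_iff.mp
    ((nonneg_iff_posSemidef.mp hA).mul_mul_conjTranspose_same C).trace_nonneg).1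

lemma re_trace_mul_le_re_trace_mul {A B Q : Matrix n n ℂ} (h : A ≤ B) (hQ : 0 ≤ Q) :
    (A * Q).trace.re ≤ (B * Q).trace.re := by
  have := re_trace_mul_nonneg (sub_nonneg.mpr h) hQ
  rwa [sub_mul, trace_sub, Complex.sub_re, sub_nonneg] at this

variable [DecidableEq n]

lemma re_trace_le_re_trace {A B : Matrix n n ℂ} (h : A ≤ B) : A.trace.re ≤ B.trace.re := by
  simpa using re_trace_mul_le_re_trace_mul h zero_le_one

lemma minEig_smul_one_le {A : Matrix n n ℂ} (hA : A.IsHermitian) :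
    minEig A • (1 : Matrix n n ℂ) ≤ A := by
  rw [← Algebra.algebraMap_eq_smul_one, algebraMap_le_iff_le_spectrum hA.isSelfAdjoint,
    hA.spectrum_real_eq_range_eigenvalues]
  rintro _ ⟨i, rfl⟩
  rw [minEig, dif_pos hA]
  exact ciInf_le (Set.finite_range _).bddBelow i

end LoewnerOrder

end Matrix

open Matrix

section Density

variable {n : Type*} [Fintype n]

lemma isDensity_inv_smul {A : Matrix n n ℂ} (hA : A.PosSemidef) (hpos : 0 < A.trace.re) :
    IsDensity (A.trace.re⁻¹ • A) := by
  refine ⟨hA.smul (inv_nonneg.mpr hpos.le), ?_⟩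
  have htr : A.trace = (A.trace.re : ℂ) :=
    Complex.ext rfl (Complex.nonneg_iff.mp hA.trace_nonneg).2.symm
  rw [trace_smul, Complex.real_smul, htr, Complex.ofReal_re, ← Complex.ofReal_mul,
    inv_mul_cancel₀ hpos.ne', Complex.ofReal_one]

variable [DecidableEq n]

lemma IsDensity.le_one {σ : Matrix n n ℂ} (hσ : IsDensity σ) : σ ≤ 1 := by
  have hH : σ.IsHermitian := hσ.1.isHermitian
  rw [CFC.le_one_iff (R := ℝ) σ hH.isSelfAdjoint, hH.spectrum_real_eq_range_eigenvalues]
  rintro _ ⟨i, rfl⟩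
  have hsum : ∑ j, hH.eigenvalues j = 1 := by
    have := hH.trace_eq_sum_eigenvalues
    rw [hσ.2] at this
    simpa using (congrArg Complex.re this).symm
  exact hsum ▸ Finset.single_le_sum (fun j _ => hσ.1.eigenvalues_nonneg j) (Finset.mem_univ i)

lemma minEig_smul_le_of_isDensity {A σ : Matrix n n ℂ} (hA : A.IsHermitian)
    (hmin : 0 ≤ minEig A) (hσ : IsDensity σ) : minEig A • σ ≤ A :=
  (smul_le_smul_of_nonneg_left hσ.le_one hmin).trans (minEig_smul_one_le hA)

lemma exists_smul_le_le_smul_of_mem_robustSet {F : Set (Matrix n n ℂ)} {ρ : Matrix n n ℂ}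
    (hρ : ρ.IsHermitian) (hmin : 0 ≤ minEig ρ) (hF : ∀ ω ∈ F, IsDensity ω) {s : ℝ}
    (hs : s ∈ RobustSet F ρ) : ∃ ω ∈ F, minEig ρ • ω ≤ ρ ∧ ρ ≤ (1 + s) • ω := by
  obtain ⟨hs0, σ, hσ, hωF⟩ := hs
  refine ⟨_, hωF, minEig_smul_le_of_isDensity hρ hmin (hF _ hωF), ?_⟩
  rw [smul_smul, mul_inv_cancel₀ (by linarith), one_smul, le_add_iff_nonneg_right]
  exact smul_nonneg hs0 hσ.1.nonneg

end Density

lemma PosMap.monotone {n m : Type*} [Fintype n] [Fintype m] {Φ : Matrix n n ℂ →ₗ[ℂ] Matrix m m ℂ}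
    (hΦ : PosMap Φ) : Monotone Φ := fun A B h => by
  rw [le_iff, ← map_sub]
  exact hΦ _ h

namespace Matrix

section PiKronecker

variable {ι d R : Type*} [Fintype ι]

def piKronecker [CommMonoid R] (A : ι → Matrix d d R) : Matrix (ι → d) (ι → d) R :=
  of fun x y => ∏ i, A i (x i) (y i)

lemma piKronecker_apply [CommMonoid R] (A : ι → Matrix d d R) (x y : ι → d) :
    piKronecker A x y = ∏ i, A i (x i) (y i) := rfl

lemma kronPow_eq_piKronecker {k : ℕ} (A : Matrix (Fin k) (Fin k) ℂ) (n : ℕ) :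
    kronPow A n = piKronecker fun _ => A := rfl

lemma piKronecker_conjTranspose [CommMonoid R] [StarMul R] (A : ι → Matrix d d R) :
    (piKronecker A)ᴴ = piKronecker fun i => (A i)ᴴ := by
  ext x y
  simp [piKronecker_apply, conjTranspose_apply, star_prod]

lemma piKronecker_vecMulVec [CommMonoid R] (u v : ι → d → R) :
    (piKronecker fun i => vecMulVec (u i) (v i)) =
      vecMulVec (fun x => ∏ i, u i (x i)) (fun y => ∏ i, v i (y i)) := by
  ext x y
  simp [piKronecker_apply, vecMulVec_apply, Finset.prod_mul_distrib]

lemma piKronecker_one [CommSemiring R] [DecidableEq d] :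
    piKronecker (1 : ι → Matrix d d R) = 1 := by
  ext x y
  simp only [piKronecker_apply, Pi.one_apply, one_apply, Finset.prod_boole, funext_iff]
  simp

lemma piKronecker_update_sub [CommRing R] [DecidableEq ι] (A : ι → Matrix d d R) (a : ι)
    (X Y : Matrix d d R) :
    piKronecker (Function.update A a (X - Y)) =
      piKronecker (Function.update A a X) - piKronecker (Function.update A a Y) := by
  ext x y
  simp only [piKronecker_apply, sub_apply,
    ← Finset.mul_prod_erase _ _ (Finset.mem_univ a), Function.update_self, sub_mul]
  congr 2 <;> exact Finset.prod_congr rfl fun j hj => by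
    simp only [Function.update_of_ne (Finset.ne_of_mem_erase hj)]

variable [Fintype d]

lemma piKronecker_mul [CommSemiring R] [DecidableEq ι] (A B : ι → Matrix d d R) :
    piKronecker A * piKronecker B = piKronecker fun i => A i * B i := by
  ext x y
  simp only [mul_apply, piKronecker_apply, ← Finset.prod_mul_distrib]
  rw [Fintype.prod_sum]

lemma trace_piKronecker [CommSemiring R] [DecidableEq ι] (A : ι → Matrix d d R) :
    (piKronecker A).trace = ∏ i, (A i).trace := by
  simp only [trace, diag, piKronecker_apply]
  rw [Fintype.prod_sum]

variable [DecidableEq ι]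

lemma isStarProjection_piKronecker {P : ι → Matrix d d ℂ} (hP : ∀ i, IsStarProjection (P i)) :
    IsStarProjection (piKronecker P) where
  isIdempotentElem := by
    rw [IsIdempotentElem, piKronecker_mul]
    exact congrArg piKronecker (funext fun i => (hP i).isIdempotentElem)
  isSelfAdjoint := by
    rw [IsSelfAdjoint, star_eq_conjTranspose, piKronecker_conjTranspose]
    exact congrArg piKronecker (funext fun i => (hP i).isSelfAdjoint)

variable [DecidableEq d]

lemma piKronecker_nonneg {A : ι → Matrix d d ℂ} (hA : ∀ i, 0 ≤ A i) : 0 ≤ piKronecker A := by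
  choose B hB using fun i => CStarAlgebra.nonneg_iff_eq_star_mul_self.mp (hA i)
  rw [funext hB]
  simp only [star_eq_conjTranspose]
  rw [← piKronecker_mul, ← piKronecker_conjTranspose]
  exact star_mul_self_nonneg _

lemma piKronecker_mono {A B : ι → Matrix d d ℂ} (hA : ∀ i, 0 ≤ A i) (hAB : ∀ i, A i ≤ B i) :
    piKronecker A ≤ piKronecker B := by
  suffices ∀ s : Finset ι, piKronecker A ≤ piKronecker fun i => if i ∈ s then B i else A i by
    simpa using this Finset.univ
  intro s
  induction s using Finset.induction with
  | empty => simp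
  | insert a s ha ih =>
    set C : ι → Matrix d d ℂ := fun i => if i ∈ s then B i else A i
    have hC : C = Function.update C a (A a) := by
      ext1 i
      rcases eq_or_ne i a with rfl | hi
      · simp [C, ha]
      · rw [Function.update_of_ne hi]
    have hC' : (fun i => if i ∈ insert a s then B i else A i) = Function.update C a (B a) := by
      ext1 i
      rcases eq_or_ne i a with rfl | hi
      · simp
      · simp [C, hi]
    refine ih.trans (sub_nonneg.mp ?_)
    rw [hC', hC, Function.update_idem, ← piKronecker_update_sub]
    refine piKronecker_nonneg fun i => ?_
    rcases eq_or_ne i a with rfl | hi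
    · simpa using hAB i
    · rw [Function.update_of_ne hi]
      dsimp only [C]
      split_ifs
      exacts [(hA i).trans (hAB i), hA i]

lemma one_sub_piKronecker_le_sum {P : ι → Matrix d d ℂ} (hP : ∀ i, IsStarProjection (P i)) :
    1 - piKronecker P ≤ ∑ i, (1 - piKronecker (Pi.mulSingle i (P i))) := by
  suffices ∀ s : Finset ι, 1 - piKronecker (fun j => if j ∈ s then P j else 1) ≤
      ∑ i ∈ s, (1 - piKronecker (Pi.mulSingle i (P i))) by
    simpa using this Finset.univ
  intro s
  induction s using Finset.induction with
  | empty => simp [← Pi.one_def, piKronecker_one]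
  | insert a s ha ih =>
    set Q := piKronecker fun j => if j ∈ s then P j else 1
    set Pa := piKronecker (Pi.mulSingle a (P a))
    have hmul : (piKronecker fun j => if j ∈ insert a s then P j else 1) = Q * Pa := by
      rw [piKronecker_mul]
      congr 1; ext1 j
      rcases eq_or_ne j a with rfl | hj <;> simp [*]
    have hcomm : Commute Q Pa := by
      rw [Commute, SemiconjBy, piKronecker_mul, piKronecker_mul]
      congr 1; ext1 j
      rcases eq_or_ne j a with rfl | hj <;> simp [*]
    have hQ : IsStarProjection Q :=
      isStarProjection_piKronecker fun j => by split_ifs; exacts [hP j, .one _]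
    have hPa : IsStarProjection Pa :=
      isStarProjection_piKronecker fun j => by
        rcases eq_or_ne j a with rfl | hj <;> simp [*, IsStarProjection.one]
    rw [hmul, Finset.sum_insert ha, add_comm (1 - Pa)]
    exact (hQ.one_sub_mul_le hPa hcomm).trans (add_le_add ih le_rfl)

lemma re_trace_mul_one_sub_piKronecker_le {τ : Matrix (ι → d) (ι → d) ℂ} (hτ : IsDensity τ)
    {P : ι → Matrix d d ℂ} (hP : ∀ i, IsStarProjection (P i)) {ε : ℝ}
    (h : ∀ i, 1 - ε ≤ (τ * piKronecker (Pi.mulSingle i (P i))).trace.re) :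
    (τ * (1 - piKronecker P)).trace.re ≤ Fintype.card ι * ε := by
  calc (τ * (1 - piKronecker P)).trace.re
      ≤ (τ * ∑ i, (1 - piKronecker (Pi.mulSingle i (P i)))).trace.re := by
        rw [trace_mul_comm τ, trace_mul_comm τ]
        exact re_trace_mul_le_re_trace_mul (one_sub_piKronecker_le_sum hP) hτ.1.nonneg
    _ = ∑ i, (1 - (τ * piKronecker (Pi.mulSingle i (P i))).trace.re) := by
        simp only [Finset.mul_sum, trace_sum, mul_sub, mul_one, trace_sub, Complex.re_sum,
          Complex.sub_re, hτ.2, Complex.one_re]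
    _ ≤ ∑ _i : ι, ε := Finset.sum_le_sum fun i _ => by linarith [h i]
    _ = Fintype.card ι * ε := by simp

end PiKronecker

end Matrix

section KroneckerPower

variable {d : ℕ}

lemma kronPow_smul (r : ℝ) (A : Matrix (Fin d) (Fin d) ℂ) (n : ℕ) :
    kronPow (r • A) n = r ^ n • kronPow A n := by
  ext x y
  simp [kronPow, Finset.prod_mul_distrib]

lemma kronPow_mono {A B : Matrix (Fin d) (Fin d) ℂ} (hA : 0 ≤ A) (hAB : A ≤ B) (n : ℕ) :
    kronPow A n ≤ kronPow B n :=
  piKronecker_mono (fun _ => hA) fun _ => hAB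

lemma IsDensity.kronPow {ρ : Matrix (Fin d) (Fin d) ℂ} (hρ : IsDensity ρ) (n : ℕ) :
    IsDensity (kronPow ρ n) := by
  refine ⟨(piKronecker_nonneg fun _ => hρ.1.nonneg).posSemidef, ?_⟩
  rw [kronPow_eq_piKronecker, trace_piKronecker, hρ.2]
  simp

lemma exists_kronPow_sandwich_of_mem_robustSet {F : Set (Matrix (Fin d) (Fin d) ℂ)}
    {ρ : Matrix (Fin d) (Fin d) ℂ} (hρ : ρ.PosSemidef) (hmin : 0 ≤ minEig ρ)
    (hF : ∀ ω ∈ F, IsDensity ω) (n : ℕ) {s : ℝ} (hs : s ∈ RobustSet F ρ) :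
    ∃ ω ∈ F, minEig ρ ^ n • kronPow ω n ≤ kronPow ρ n ∧
      kronPow ρ n ≤ (1 + s) ^ n • kronPow ω n := by
  obtain ⟨ω, hωF, hlow, hup⟩ := exists_smul_le_le_smul_of_mem_robustSet hρ.1 hmin hF hs
  refine ⟨ω, hωF, ?_, ?_⟩ <;> rw [← kronPow_smul]
  · exact kronPow_mono (smul_nonneg hmin (hF ω hωF).1.nonneg) hlow n
  · exact kronPow_mono hρ.nonneg hup n

end KroneckerPower

lemma isStarProjection_vecMulVec_star {d : Type*} [Fintype d] {ψ : d → ℂ}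
    (hψ : star ψ ⬝ᵥ ψ = 1) : IsStarProjection (vecMulVec ψ (star ψ)) where
  isIdempotentElem := by rw [IsIdempotentElem, vecMulVec_mul_vecMulVec, hψ, one_smul]
  isSelfAdjoint := by rw [IsSelfAdjoint, star_eq_conjTranspose, conjTranspose_vecMulVec, star_star]

lemma overlap_eq_re_trace {d : Type*} [Fintype d] (A : Matrix d d ℂ) (ψ : d → ℂ) :
    overlap A ψ = (A * vecMulVec ψ (star ψ)).trace.re := by
  rw [overlap, mul_vecMulVec, trace_vecMulVec, dotProduct_comm]

section MagicState

def Tproj : Matrix (Fin 2) (Fin 2) ℂ := vecMulVec Tket (star Tket)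

lemma star_Tket_dotProduct_Tket : star Tket ⬝ᵥ Tket = 1 := by
  simp only [dotProduct, Fin.sum_univ_two, Pi.star_apply, Complex.star_def, Complex.conj_mul',
    Tket, Matrix.cons_val_zero, Matrix.cons_val_one, norm_mul, norm_inv, Complex.norm_real]
  have hexp : ‖Complex.exp (Complex.I * (Real.pi / 4))‖ = 1 := by simp [Complex.norm_exp]
  rw [hexp, one_mul, Real.norm_of_nonneg (Real.sqrt_nonneg 2), ← two_mul, ← Complex.ofReal_pow,
    inv_pow, Real.sq_sqrt zero_le_two]
  norm_num

lemma isStarProjection_Tproj : IsStarProjection Tproj :=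
  isStarProjection_vecMulVec_star star_Tket_dotProduct_Tket

lemma isStarProjection_kronPow_Tproj (m : ℕ) : IsStarProjection (kronPow Tproj m) :=
  isStarProjection_piKronecker fun _ => isStarProjection_Tproj

lemma margTProj_eq_piKronecker (m : ℕ) (i : Fin m) :
    margTProj m i = piKronecker (Pi.mulSingle i Tproj) := by
  ext x y
  rw [piKronecker_apply, ← Finset.mul_prod_erase _ _ (Finset.mem_univ i)]
  simp only [margTProj, of_apply, Pi.mulSingle_eq_same, Tproj, vecMulVec_apply, Pi.star_apply]
  congr 1
  exact Finset.prod_congr rfl fun j hj => by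
    rw [Pi.mulSingle_eq_of_ne (Finset.ne_of_mem_erase hj), one_apply]

lemma overlap_TketPow {m : ℕ} (A : Matrix (Fin m → Fin 2) (Fin m → Fin 2) ℂ) :
    overlap A (TketPow m) = (A * kronPow Tproj m).trace.re := by
  rw [overlap_eq_re_trace, kronPow_eq_piKronecker, Tproj, piKronecker_vecMulVec]
  congr 4
  ext y
  simp [TketPow, star_prod]

end MagicState

section FreeProtocol

variable {N M : Type*} [Fintype N] [Fintype M]

lemma re_trace_le_re_trace_of_posMap {L G : Matrix N N ℂ →ₗ[ℂ] Matrix M M ℂ} (hG : PosMap G)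
    (hTP : ∀ X, (L X).trace + (G X).trace = X.trace) {X : Matrix N N ℂ} (hX : X.PosSemidef) :
    (L X).trace.re ≤ X.trace.re := by
  have h := congrArg Complex.re (hTP X)
  have hG0 := (Complex.nonneg_iff.mp (hG X hX).trace_nonneg).1
  rw [Complex.add_re] at h
  linarith

variable [DecidableEq M]

/-- The output `τ = L X / p` fails the test `Q` at least `κ / K` times as often as `ω'` does. -/
lemma mul_one_sub_le_mul_of_sandwich {L : Matrix N N ℂ →ₗ[ℂ] Matrix M M ℂ} (hL : PosMap L)
    {X Y : Matrix N N ℂ} {κ K t p : ℝ} (hκ : 0 ≤ κ) (hlow : κ • Y ≤ X) (hup : X ≤ K • Y)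
    (hp : 0 < p) (ht : 0 ≤ t) {ω' τ Q : Matrix M M ℂ} (hω' : IsDensity ω')
    (hLY : L Y = (t : ℂ) • ω') (hτ : IsDensity τ) (hLX : L X = p • τ)
    (hQ : IsStarProjection Q) :
    κ * (1 - (ω' * Q).trace.re) ≤ K * (τ * (1 - Q)).trace.re := by
  rw [Complex.coe_smul] at hLY
  have hLκY : L (κ • Y) = (κ * t) • ω' := by
    rw [LinearMap.map_smul_of_tower, hLY, smul_smul]
  have hLKY : L (K • Y) = (K * t) • ω' := by
    rw [LinearMap.map_smul_of_tower, hLY, smul_smul]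
  have hω'Q : (ω' * (1 - Q)).trace.re = 1 - (ω' * Q).trace.re := by
    simp [mul_sub, hω'.2]
  have hup' : p ≤ K * t := by
    simpa [hLX, hLKY, hτ.2, hω'.2] using re_trace_le_re_trace (hL.monotone hup)
  have hlow' : κ * t * (1 - (ω' * Q).trace.re) ≤ p * (τ * (1 - Q)).trace.re := by
    simpa [hLX, hLκY, hω'Q] using re_trace_mul_le_re_trace_mul (hL.monotone hlow) hQ.one_sub_nonneg
  have hf : 0 ≤ 1 - (ω' * Q).trace.re := hω'Q ▸ re_trace_mul_nonneg hω'.1.nonneg hQ.one_sub_nonneg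
  have hK : 0 ≤ K := by
    by_contra! hK
    nlinarith [mul_nonpos_of_nonpos_of_nonneg hK.le ht]
  have : κ * (1 - (ω' * Q).trace.re) * p ≤ K * (τ * (1 - Q)).trace.re * p := by
    calc κ * (1 - (ω' * Q).trace.re) * p ≤ κ * (1 - (ω' * Q).trace.re) * (K * t) := by gcongr
      _ = K * (κ * t * (1 - (ω' * Q).trace.re)) := by ring
      _ ≤ K * (p * (τ * (1 - Q)).trace.re) := by gcongr
      _ = K * (τ * (1 - Q)).trace.re * p := by ring
  exact le_of_mul_le_mul_right this hp

end FreeProtocol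

lemma le_apply_csInf_of_forall_le {S : Set ℝ} (hne : S.Nonempty) (hbdd : BddBelow S)
    {g : ℝ → ℝ} (hg : Continuous g) {a : ℝ} (h : ∀ s ∈ S, a ≤ g s) : a ≤ g (sInf S) :=
  closure_minimal h (isClosed_le continuous_const hg) (csInf_mem_closure hne hbdd)

lemma overhead_bounds_of_le {lam c R p ε : ℝ} {n m : ℕ} (hlam : 0 < lam) (hc : 1 ≤ c)
    (hR : 0 ≤ R) (hp : 0 < p) (hp1 : p ≤ 1) (hε : 0 ≤ ε)
    (h : lam ^ n * (1 - c⁻¹) ≤ m * ε * (1 + R) ^ n) :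
    lam ^ n * (1 - c⁻¹) / (m * (1 + R) ^ n) ≤ ε / p ∧
      (0 < ε → (c - 1) * p / (c * m * ε) ≤ ((1 + R) / lam) ^ n) := by
  refine ⟨?_, fun _ => ?_⟩
  · refine (div_le_of_le_mul₀ (by positivity) hε ?_).trans (le_div_self hε hp hp1)
    linarith
  · refine div_le_of_le_mul₀ (by positivity) (by positivity) ?_
    have hc0 : 0 < c := by linarith
    calc (c - 1) * p ≤ c - 1 := mul_le_of_le_one_right (by linarith) hp1
      _ = c * (lam ^ n * (1 - c⁻¹)) / lam ^ n := by field_simp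
      _ ≤ c * (m * ε * (1 + R) ^ n) / lam ^ n := by gcongr
      _ = ((1 + R) / lam) ^ n * (c * m * ε) := by rw [div_pow]; ring

theorem magic_state_distillation_overhead_general {D : ℕ}
    (ρhat : Matrix (Fin D) (Fin D) ℂ) (hρ : IsDensity ρhat) (hρfull : 0 < minEig ρhat)
    (F : Set (Matrix (Fin D) (Fin D) ℂ))
    (hFden : ∀ ω ∈ F, IsDensity ω)
    (hRfin : (RobustSet F ρhat).Nonempty)
    (n m : ℕ)
    (Fn : Set (Matrix (Fin n → Fin D) (Fin n → Fin D) ℂ))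
    (hFnpow : ∀ ω ∈ F, kronPow ω n ∈ Fn)
    (F'm : Set (Matrix (Fin m → Fin 2) (Fin m → Fin 2) ℂ))
    (hF'den : ∀ ω ∈ F'm, IsDensity ω)
    (hF'overlap : ∀ ω ∈ F'm, overlap ω (TketPow m) ≤ ((4 - 2 * Real.sqrt 2) ^ m)⁻¹)
    (L G : Matrix (Fin n → Fin D) (Fin n → Fin D) ℂ →ₗ[ℂ]
      Matrix (Fin m → Fin 2) (Fin m → Fin 2) ℂ)
    (hLpos : PosMap L) (hGpos : PosMap G)
    (hTP : ∀ X, (L X).trace + (G X).trace = X.trace)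
    (hLfree : ∀ ω ∈ Fn, ∃ t : ℝ, 0 ≤ t ∧ ∃ ω' ∈ F'm, L ω = (t : ℂ) • ω')
    (p : ℝ) (hp : p = ((L (kronPow ρhat n)).trace).re) (hppos : 0 < p)
    (τ : Matrix (Fin m → Fin 2) (Fin m → Fin 2) ℂ)
    (hτ : τ = p⁻¹ • L (kronPow ρhat n))
    (ε : ℝ) (hε : 0 ≤ ε)
    (hmarg : ∀ i : Fin m, 1 - ε ≤ ((τ * margTProj m i).trace).re) :
    minEig ρhat ^ n * (1 - ((4 - 2 * Real.sqrt 2) ^ m)⁻¹) /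
        ((m : ℝ) * (1 + Robustness F ρhat) ^ n) ≤ ε / p ∧
    (0 < ε →
      ((4 - 2 * Real.sqrt 2) ^ m - 1) * p / ((4 - 2 * Real.sqrt 2) ^ m * (m : ℝ) * ε)
        ≤ ((1 + Robustness F ρhat) / minEig ρhat) ^ n) := by
  set X := kronPow ρhat n
  have hX : IsDensity X := hρ.kronPow n
  have hτD : IsDensity τ := by
    rw [hτ, hp]
    exact isDensity_inv_smul (hLpos X hX.1) (hp ▸ hppos)
  have hLX : L X = p • τ := by rw [hτ, smul_inv_smul₀ hppos.ne']
  have hp1 : p ≤ 1 := by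
    simpa [← hp, hX.2] using re_trace_le_re_trace_of_posMap hGpos hTP hX.1
  have hunion : (τ * (1 - kronPow Tproj m)).trace.re ≤ m * ε := by
    simpa [kronPow_eq_piKronecker] using
      re_trace_mul_one_sub_piKronecker_le hτD (fun _ => isStarProjection_Tproj)
      (by simpa only [margTProj_eq_piKronecker] using hmarg)
  have hwit : ∀ s ∈ RobustSet F ρhat,
      minEig ρhat ^ n * (1 - ((4 - 2 * Real.sqrt 2) ^ m)⁻¹) ≤ m * ε * (1 + s) ^ n := by
    intro s hs
    obtain ⟨ω, hωF, hlow, hup⟩ :=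
      exists_kronPow_sandwich_of_mem_robustSet hρ.1 hρfull.le hFden n hs
    obtain ⟨t, ht, ω', hω'F, hLω⟩ := hLfree _ (hFnpow ω hωF)
    have hs0 : 0 ≤ s := hs.1
    calc _ ≤ minEig ρhat ^ n * (1 - overlap ω' (TketPow m)) := by
          gcongr; exact hF'overlap ω' hω'F
      _ ≤ (1 + s) ^ n * (τ * (1 - kronPow Tproj m)).trace.re := by
          rw [overlap_TketPow]
          exact mul_one_sub_le_mul_of_sandwich hLpos (by positivity) hlow hup hppos ht
            (hF'den ω' hω'F) hLω hτD hLX (isStarProjection_kronPow_Tproj m)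
      _ ≤ m * ε * (1 + s) ^ n := by rw [mul_comm]; gcongr
  exact overhead_bounds_of_le hρfull
    (one_le_pow₀ (by nlinarith [Real.sq_sqrt zero_le_two, Real.sqrt_nonneg 2]))
    (le_csInf hRfin fun s hs => hs.1) hppos hp1 hε
    (le_apply_csInf_of_forall_le hRfin ⟨0, fun s hs => hs.1⟩ (by fun_prop) hwit)

/-- **Theorem 3.**  Lower bound on the overhead of magic state distillation. -/
theorem magic_state_distillation_overhead {D : ℕ}
    (ρhat : Matrix (Fin D) (Fin D) ℂ) (hρ : IsDensity ρhat) (hρfull : 0 < minEig ρhat)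
    (F : Set (Matrix (Fin D) (Fin D) ℂ)) (hFne : F.Nonempty) (hFcl : IsClosed F)
    (hFden : ∀ ω ∈ F, IsDensity ω)
    (hRfin : (RobustSet F ρhat).Nonempty)
    (n m : ℕ) (hn : 1 ≤ n) (hm : 1 ≤ m)
    (Fn : Set (Matrix (Fin n → Fin D) (Fin n → Fin D) ℂ)) (hFncl : IsClosed Fn)
    (hFnden : ∀ ω ∈ Fn, IsDensity ω)
    (hFnpow : ∀ ω ∈ F, kronPow ω n ∈ Fn)
    (F'm : Set (Matrix (Fin m → Fin 2) (Fin m → Fin 2) ℂ))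
    (hF'den : ∀ ω ∈ F'm, IsDensity ω)
    (hF'overlap : ∀ ω ∈ F'm, overlap ω (TketPow m) ≤ ((4 - 2 * Real.sqrt 2) ^ m)⁻¹)
    (L G : Matrix (Fin n → Fin D) (Fin n → Fin D) ℂ →ₗ[ℂ]
      Matrix (Fin m → Fin 2) (Fin m → Fin 2) ℂ)
    (hLpos : PosMap L) (hGpos : PosMap G)
    (hTP : ∀ X, (L X).trace + (G X).trace = X.trace)
    (hLfree : ∀ ω ∈ Fn, ∃ t : ℝ, 0 ≤ t ∧ ∃ ω' ∈ F'm, L ω = (t : ℂ) • ω')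
    (p : ℝ) (hp : p = ((L (kronPow ρhat n)).trace).re) (hppos : 0 < p)
    (τ : Matrix (Fin m → Fin 2) (Fin m → Fin 2) ℂ)
    (hτ : τ = p⁻¹ • L (kronPow ρhat n))
    (ε : ℝ) (hε : 0 ≤ ε)
    (hmarg : ∀ i : Fin m, 1 - ε ≤ ((τ * margTProj m i).trace).re) :
    minEig ρhat ^ n * (1 - ((4 - 2 * Real.sqrt 2) ^ m)⁻¹) /
        ((m : ℝ) * (1 + Robustness F ρhat) ^ n) ≤ ε / p ∧
    (0 < ε →
      ((4 - 2 * Real.sqrt 2) ^ m - 1) * p / ((4 - 2 * Real.sqrt 2) ^ m * (m : ℝ) * ε)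
        ≤ ((1 + Robustness F ρhat) / minEig ρhat) ^ n) :=
  magic_state_distillation_overhead_general ρhat hρ hρfull F hFden hRfin n m Fn hFnpow F'm hF'den
    hF'overlap L G hLpos hGpos hTP hLfree p hp hppos τ hτ ε hε hmarg
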